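/- Let A₁, …, A_m be symmetric real n×n matrices with Σ_{i=1}^m |A_i| ≼ I_n, and let M be a density matrix. Define the m×m matrix N by N(i,j) := tr(√M · A_i · √M · A_j · √M). Then N is positive semidefinite, and there exists a linear subspace W ⊆ ℝ^m with dim W ≥ m/3 such that every unit vector y ∈ W satisfies yᵀN y ≤ 9√n/m²; equivalently, every unit vector y ∈ W satisfies tr(√M · A(y) · √M · A(y) · √M) ≤ 9√n/m², where A(y) := Σ_{i=1}^m y(i)·A_i. -/

import Mathlib

open Matrix

/-- The matrix absolute value of a symmetric real matrix `C`:
the positive semidefinite square root of `CᴴC = C²`. -/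
noncomputable def matAbs {n : ℕ} (C : Matrix (Fin n) (Fin n) ℝ) : Matrix (Fin n) (Fin n) ℝ :=
  (Matrix.posSemidef_conjTranspose_mul_self C).1.eigenvectorUnitary.1 *
    diagonal (Real.sqrt ∘ (Matrix.posSemidef_conjTranspose_mul_self C).1.eigenvalues) *
    (star (Matrix.posSemidef_conjTranspose_mul_self C).1.eigenvectorUnitary : Matrix (Fin n) (Fin n) ℝ)

open Classical in
/-- The positive semidefinite square root of a matrix (zero if the matrix is not
positive semidefinite). -/
noncomputable def psdSqrt {n : ℕ} (M : Matrix (Fin n) (Fin n) ℝ) :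
    Matrix (Fin n) (Fin n) ℝ :=
  if h : M.PosSemidef then h.1.eigenvectorUnitary.1 * diagonal (Real.sqrt ∘ h.1.eigenvalues) *
    (star h.1.eigenvectorUnitary : Matrix (Fin n) (Fin n) ℝ) else 0

/-!
Write `S = √M` and `N i j = tr (S Aᵢ S Aⱼ S)`. Since `yᵀ N y = tr ((S A(y)) S (S A(y))ᵀ)`, `N` is
positive semidefinite. Diagonalising `Aᵢ` and applying Cauchy–Schwarz to the entries of `S` and
`M = S²` gives `N i i ≤ tr (|Aᵢ| M) · tr (|Aᵢ| S)`, and summing with `∑ |Aᵢ| ≼ 1` yields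
`∑ √(N i i) ≤ √(tr M) √(tr S) ≤ n^{1/4}`. As `√N` has diagonal entries at most `√(N i i)`, the
same bound holds for `∑ √λₖ` over the eigenvalues of `N`, so at most `m / 3` of them exceed
`t = 9 √n / m²`; the eigenvectors of the others span the required subspace.
-/

open scoped MatrixOrder
open Finset Unitary

theorem Finset.card_filter_lt_mul_sqrt_le {κ : Type*} (s : Finset κ) (f : κ → ℝ) (t : ℝ) :
    #{k ∈ s | t < f k} * √t ≤ ∑ k ∈ s, √(f k) :=
  calc #{k ∈ s | t < f k} * √t = ∑ k ∈ s with t < f k, √t := by rw [sum_const, nsmul_eq_mul]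
    _ ≤ ∑ k ∈ s with t < f k, √(f k) :=
      sum_le_sum fun k hk => Real.sqrt_le_sqrt (mem_filter.mp hk).2.le
    _ ≤ ∑ k ∈ s, √(f k) :=
      sum_le_sum_of_subset_of_nonneg (filter_subset _ _) fun _ _ _ => Real.sqrt_nonneg _

namespace Matrix

theorem PosSemidef.abs_apply_le {ι : Type*} {X : Matrix ι ι ℝ} (hX : X.PosSemidef) (i j : ι) :
    |X i j| ≤ √(X i i) * √(X j j) := by
  have hdet := (hX.submatrix ![i, j]).det_nonneg
  have hsymm : X j i = X i j := by simpa using hX.1.apply i j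
  simp only [det_fin_two, submatrix_apply, cons_val_zero, cons_val_one, hsymm] at hdet
  rw [← Real.sqrt_mul hX.diag_nonneg, ← Real.sqrt_sq_eq_abs]
  exact Real.sqrt_le_sqrt (by linarith [sq (X i j)])

variable {ι κ : Type*} [Fintype ι]

theorem IsHermitian.sq_apply_le_mul_self_apply {S : Matrix ι ι ℝ} (hS : S.IsHermitian) (i : ι) :
    S i i ^ 2 ≤ (S * S) i i := by
  rw [mul_apply, sq]
  refine single_le_sum (f := fun j => S i j * S j i) (fun j _ => ?_) (mem_univ i)
  rw [← hS.apply i j, star_trivial]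
  exact mul_self_nonneg _

theorem IsHermitian.trace_sq_le {S : Matrix ι ι ℝ} (hS : S.IsHermitian) :
    S.trace ^ 2 ≤ Fintype.card ι * (S * S).trace :=
  calc S.trace ^ 2 = (∑ i, 1 * S i i) ^ 2 := by simp [trace]
    _ ≤ (∑ _i : ι, 1 ^ 2) * ∑ i, S i i ^ 2 := sum_mul_sq_le_sq_mul_sq _ _ _
    _ = Fintype.card ι * ∑ i, S i i ^ 2 := by simp
    _ ≤ Fintype.card ι * (S * S).trace :=
        mul_le_mul_of_nonneg_left (sum_le_sum fun i _ => hS.sq_apply_le_mul_self_apply i)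
          (Nat.cast_nonneg _)

def traceGram (S : Matrix ι ι ℝ) (A : κ → Matrix ι ι ℝ) : Matrix κ κ ℝ :=
  of fun i j => (S * A i * S * A j * S).trace

theorem dotProduct_traceGram_mulVec [Fintype κ] (S : Matrix ι ι ℝ) (A : κ → Matrix ι ι ℝ)
    (y : κ → ℝ) :
    y ⬝ᵥ (traceGram S A *ᵥ y) =
      (S * (∑ i, y i • A i) * S * (∑ i, y i • A i) * S).trace := by
  simp only [traceGram, dotProduct, mulVec, of_apply, Matrix.sum_mul,
    Matrix.mul_smul, Matrix.smul_mul, trace_sum, trace_smul, smul_eq_mul, mul_sum]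
  rw [sum_comm]
  exact sum_congr rfl fun i _ => sum_congr rfl fun j _ => by ring

theorem posSemidef_traceGram [Fintype κ] {S : Matrix ι ι ℝ} (hS : S.PosSemidef)
    {A : κ → Matrix ι ι ℝ} (hA : ∀ i, (A i).IsHermitian) : (traceGram S A).PosSemidef := by
  refine PosSemidef.of_dotProduct_mulVec_nonneg ?_ fun y => ?_
  · ext i j
    rw [conjTranspose_apply, star_trivial, traceGram, of_apply, of_apply, ← trace_transpose,
      ← conjTranspose_eq_transpose_of_trivial]
    simp only [conjTranspose_mul, hS.1.eq, (hA _).eq, Matrix.mul_assoc]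
  · set B := ∑ i, y i • A i
    have hB : Bᴴ = B := by
      simp only [B, conjTranspose_sum, conjTranspose_smul, (hA _).eq, star_trivial]
    have hsandwich : S * B * S * B * S = (S * B) * S * (S * B)ᴴ := by
      rw [conjTranspose_mul, hB, hS.1.eq]
      simp only [Matrix.mul_assoc]
    rw [star_trivial, dotProduct_traceGram_mulVec, hsandwich]
    exact (hS.mul_mul_conjTranspose_same _).trace_nonneg

variable [DecidableEq ι]

theorem PosSemidef.sqrt_eq_conj_diagonal {Q : Matrix ι ι ℝ} (hQ : Q.PosSemidef) :
    CFC.sqrt Q = hQ.1.eigenvectorUnitary.1 * diagonal (Real.sqrt ∘ hQ.1.eigenvalues) *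
      (star hQ.1.eigenvectorUnitary : Matrix ι ι ℝ) := by
  rw [CFC.sqrt_eq_real_sqrt Q hQ.nonneg, cfcₙ_eq_cfc, hQ.1.cfc_eq]
  rfl

theorem trace_conjStarAlgAut {R : Type*} [CommRing R] [StarRing R] (U : unitary (Matrix ι ι R))
    (X : Matrix ι ι R) : (conjStarAlgAut R _ U X).trace = X.trace := by
  rw [conjStarAlgAut_apply, trace_mul_cycle, coe_star_mul_self, one_mul]

theorem IsHermitian.trace_cfc {A : Matrix ι ι ℝ} (hA : A.IsHermitian) (f : ℝ → ℝ) :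
    (cfc f A).trace = ∑ i, f (hA.eigenvalues i) := by
  rw [hA.cfc_eq, IsHermitian.cfc, trace_conjStarAlgAut, trace_diagonal]
  rfl

theorem PosSemidef.trace_mul_nonneg {P Q : Matrix ι ι ℝ} (hP : P.PosSemidef)
    (hQ : Q.PosSemidef) : 0 ≤ (P * Q).trace := by
  have hR : (CFC.sqrt Q)ᴴ = CFC.sqrt Q := (CFC.sqrt_nonneg Q).posSemidef.1
  rw [← CFC.sqrt_mul_sqrt_self Q hQ.nonneg, ← Matrix.mul_assoc, trace_mul_cycle]
  simpa only [hR] using (hP.conjTranspose_mul_mul_same (CFC.sqrt Q)).trace_nonneg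

theorem sum_trace_mul_le_trace [Fintype κ] {B : κ → Matrix ι ι ℝ} (hB : (1 - ∑ i, B i).PosSemidef)
    {P : Matrix ι ι ℝ} (hP : P.PosSemidef) : ∑ i, (B i * P).trace ≤ P.trace := by
  have := hB.trace_mul_nonneg hP
  rw [Matrix.sub_mul, Matrix.one_mul, trace_sub, Matrix.sum_mul, trace_sum] at this
  linarith

theorem PosSemidef.sum_sqrt_eigenvalues_le {N : Matrix ι ι ℝ} (hN : N.PosSemidef) :
    ∑ k, √(hN.1.eigenvalues k) ≤ ∑ i, √(N i i) := by
  have hQ : (CFC.sqrt N).IsHermitian := (CFC.sqrt_nonneg N).posSemidef.1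
  rw [← hN.1.trace_cfc, ← cfcₙ_eq_cfc, ← CFC.sqrt_eq_real_sqrt N hN.nonneg]
  refine sum_le_sum fun i _ => (le_abs_self _).trans (Real.abs_le_sqrt ?_)
  simpa only [diag_apply, CFC.sqrt_mul_sqrt_self N hN.nonneg] using
    hQ.sq_apply_le_mul_self_apply i

theorem trace_mul_diagonal_mul_diagonal_le {X Y : Matrix ι ι ℝ} (hX : X.PosSemidef)
    (hY : Y.PosSemidef) (d : ι → ℝ) :
    (X * diagonal d * Y * diagonal d).trace ≤
      (diagonal |d| * X).trace * (diagonal |d| * Y).trace := by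
  set r : ι → ℝ := fun t => |d t| * √(X t t) * √(Y t t)
  have hterm : ∀ t s, X t s * d s * Y s t * d t ≤ r t * r s := fun t s =>
    calc X t s * d s * Y s t * d t ≤ |X t s| * |d s| * |Y s t| * |d t| := by
          simp only [← abs_mul]; exact le_abs_self _
      _ ≤ (√(X t t) * √(X s s)) * |d s| * (√(Y s s) * √(Y t t)) * |d t| := by
          gcongr
          exacts [hX.abs_apply_le t s, hY.abs_apply_le s t]
      _ = r t * r s := by ring
  calc (X * diagonal d * Y * diagonal d).trace = ∑ t, ∑ s, X t s * d s * Y s t * d t := by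
        simp [trace, mul_apply, diagonal_apply, sum_mul]
    _ ≤ ∑ t, ∑ s, r t * r s := sum_le_sum fun t _ => sum_le_sum fun s _ => hterm t s
    _ = (∑ t, r t) ^ 2 := by rw [sq, sum_mul_sum]
    _ ≤ (∑ t, |d t| * X t t) * ∑ t, |d t| * Y t t :=
        sum_sq_le_sum_mul_sum_of_sq_le_mul _
          (fun t _ => mul_nonneg (abs_nonneg _) hX.diag_nonneg)
          (fun t _ => mul_nonneg (abs_nonneg _) hY.diag_nonneg)
          fun t _ => le_of_eq <| by
            simp only [r, mul_pow, Real.sq_sqrt hX.diag_nonneg, Real.sq_sqrt hY.diag_nonneg]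
            ring
    _ = (diagonal |d| * X).trace * (diagonal |d| * Y).trace := by
        simp [trace, diagonal_mul]

theorem IsHermitian.trace_mul_mul_mul_le {A X Y : Matrix ι ι ℝ} (hA : A.IsHermitian)
    (hX : X.PosSemidef) (hY : Y.PosSemidef) :
    (X * A * Y * A).trace ≤ (CFC.abs A * X).trace * (CFC.abs A * Y).trace := by
  set φ := conjStarAlgAut ℝ _ hA.eigenvectorUnitary with hφ
  have hA_eq : A = φ (diagonal hA.eigenvalues) := hA.spectral_theorem
  have habs_eq : CFC.abs A = φ (diagonal |hA.eigenvalues|) := by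
    rw [CFC.abs_eq_cfc_norm A hA.isSelfAdjoint, hA.cfc_eq]
    rfl
  have hconj : ∀ {Z : Matrix ι ι ℝ}, Z.PosSemidef → (φ.symm Z).PosSemidef := fun hZ => by
    rw [conjStarAlgAut_symm_apply, star_eq_conjTranspose]
    exact hZ.conjTranspose_mul_mul_same _
  have key := trace_mul_diagonal_mul_diagonal_le (hconj hX) (hconj hY) hA.eigenvalues
  rw [← trace_conjStarAlgAut hA.eigenvectorUnitary (_ * _ * _ * _),
    ← trace_conjStarAlgAut hA.eigenvectorUnitary (diagonal _ * φ.symm X),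
    ← trace_conjStarAlgAut hA.eigenvectorUnitary (diagonal _ * φ.symm Y)] at key
  simpa only [← hφ, map_mul, φ.apply_symm_apply, ← hA_eq, ← habs_eq] using key

theorem IsHermitian.exists_submodule_dotProduct_mulVec_le {N : Matrix ι ι ℝ}
    (hN : N.IsHermitian) (t : ℝ) :
    ∃ W : Submodule ℝ (ι → ℝ),
      Fintype.card ι ≤ Module.finrank ℝ W + #{k | t < hN.eigenvalues k} ∧
      ∀ y ∈ W, y ⬝ᵥ (N *ᵥ y) ≤ t * (y ⬝ᵥ y) := by
  set U : Matrix ι ι ℝ := (hN.eigenvectorUnitary : Matrix ι ι ℝ)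
  -- `W` is cut out by the eigenbasis coordinates belonging to eigenvalues above `t`.
  set L : (ι → ℝ) →ₗ[ℝ] ({k // t < hN.eigenvalues k} → ℝ) :=
    LinearMap.funLeft ℝ ℝ Subtype.val ∘ₗ toLin' (star U)
  refine ⟨LinearMap.ker L, ?_, fun y hy => ?_⟩
  · have hrank := L.finrank_range_add_finrank_ker
    have hrange := Submodule.finrank_le (LinearMap.range L)
    simp only [Module.finrank_fintype_fun_eq_card, Fintype.card_subtype] at hrank hrange
    omega
  · have hUU : U * star U = 1 := Unitary.coe_mul_star_self _
    set z := star U *ᵥ y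
    have hz : ∀ k, t < hN.eigenvalues k → z k = 0 := fun k hk =>
      congrFun (LinearMap.mem_ker.mp hy) ⟨k, hk⟩
    have hvec : y ᵥ* U = z := by
      rw [← mulVec_transpose, ← conjTranspose_eq_transpose_of_trivial, ← star_eq_conjTranspose]
    have hy_eq : y ⬝ᵥ (N *ᵥ y) = ∑ k, hN.eigenvalues k * z k ^ 2 := by
      have hN_eq : N = U * diagonal hN.eigenvalues * star U := hN.spectral_theorem
      rw [congrArg (· *ᵥ y) hN_eq, ← mulVec_mulVec, ← mulVec_mulVec, dotProduct_mulVec, hvec]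
      simp only [dotProduct, mulVec_diagonal]
      exact sum_congr rfl fun k _ => by ring
    have hz_norm : z ⬝ᵥ z = y ⬝ᵥ y := by
      nth_rewrite 1 [← hvec]
      rw [← dotProduct_mulVec, mulVec_mulVec, hUU, one_mulVec]
    rw [hy_eq, ← hz_norm, dotProduct, mul_sum]
    refine sum_le_sum fun k _ => ?_
    by_cases hk : t < hN.eigenvalues k
    · simp [hz k hk]
    · rw [← sq]
      exact mul_le_mul_of_nonneg_right (not_lt.mp hk) (sq_nonneg _)

theorem traceGram_apply_self_le {S : Matrix ι ι ℝ} (hS : S.PosSemidef) {A : κ → Matrix ι ι ℝ}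
    (hA : ∀ i, (A i).IsHermitian) (i : κ) :
    traceGram S A i i ≤ (CFC.abs (A i) * (S * S)).trace * (CFC.abs (A i) * S).trace := by
  have h := (hA i).trace_mul_mul_mul_le (posSemidef_conjTranspose_mul_self S) hS
  rw [hS.1.eq] at h
  rw [traceGram, of_apply, trace_mul_comm, ← Matrix.mul_assoc]
  simpa only [Matrix.mul_assoc] using h

theorem sum_sqrt_traceGram_diag_le [Fintype κ] {S : Matrix ι ι ℝ} (hS : S.PosSemidef)
    {A : κ → Matrix ι ι ℝ} (hA : ∀ i, (A i).IsHermitian)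
    (hsum : (1 - ∑ i, CFC.abs (A i)).PosSemidef) :
    ∑ i, √(traceGram S A i i) ≤ √((S * S).trace) * √S.trace := by
  have hSS : (S * S).PosSemidef := by simpa only [sq] using hS.pow 2
  have habs : ∀ i, (CFC.abs (A i)).PosSemidef := fun i => (CFC.abs_nonneg (A i)).posSemidef
  calc ∑ i, √(traceGram S A i i)
      ≤ ∑ i, √((CFC.abs (A i) * (S * S)).trace) * √((CFC.abs (A i) * S).trace) :=
        sum_le_sum fun i _ => by
          rw [← Real.sqrt_mul ((habs i).trace_mul_nonneg hSS)]
          exact Real.sqrt_le_sqrt (traceGram_apply_self_le hS hA i)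
    _ ≤ √(∑ i, (CFC.abs (A i) * (S * S)).trace) * √(∑ i, (CFC.abs (A i) * S).trace) :=
        Real.sum_sqrt_mul_sqrt_le _ (fun i => (habs i).trace_mul_nonneg hSS)
          fun i => (habs i).trace_mul_nonneg hS
    _ ≤ √((S * S).trace) * √S.trace := by
        gcongr
        exacts [sum_trace_mul_le_trace hsum hSS, sum_trace_mul_le_trace hsum hS]

theorem sq_card_eigenvalues_traceGram_gt_mul_le [Fintype κ] [DecidableEq κ] {S : Matrix ι ι ℝ}
    (hS : S.PosSemidef) {A : κ → Matrix ι ι ℝ} (hA : ∀ i, (A i).IsHermitian)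
    (hsum : (1 - ∑ i, CFC.abs (A i)).PosSemidef) {t : ℝ} (ht : 0 ≤ t) :
    (#{k | t < (posSemidef_traceGram hS hA).1.eigenvalues k} : ℝ) ^ 2 * t ≤
      (S * S).trace * S.trace := by
  have hSS : (S * S).PosSemidef := by simpa only [sq] using hS.pow 2
  have hcount := (card_filter_lt_mul_sqrt_le univ _ t).trans <|
    (posSemidef_traceGram hS hA).sum_sqrt_eigenvalues_le.trans <|
      sum_sqrt_traceGram_diag_le hS hA hsum
  have := pow_le_pow_left₀ (by positivity) hcount 2
  rwa [mul_pow, mul_pow, Real.sq_sqrt ht, Real.sq_sqrt hSS.trace_nonneg,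
    Real.sq_sqrt hS.trace_nonneg] at this

end Matrix

theorem psdSqrt_eq_sqrt {n : ℕ} {M : Matrix (Fin n) (Fin n) ℝ} (hM : M.PosSemidef) :
    psdSqrt M = CFC.sqrt M := by
  rw [psdSqrt, dif_pos hM, hM.sqrt_eq_conj_diagonal]

theorem posSemidef_psdSqrt {n : ℕ} {M : Matrix (Fin n) (Fin n) ℝ} (hM : M.PosSemidef) :
    (psdSqrt M).PosSemidef :=
  psdSqrt_eq_sqrt hM ▸ (CFC.sqrt_nonneg M).posSemidef

theorem psdSqrt_mul_self {n : ℕ} {M : Matrix (Fin n) (Fin n) ℝ} (hM : M.PosSemidef) :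
    psdSqrt M * psdSqrt M = M := by
  rw [psdSqrt_eq_sqrt hM, CFC.sqrt_mul_sqrt_self M hM.nonneg]

theorem matAbs_eq_abs {n : ℕ} (C : Matrix (Fin n) (Fin n) ℝ) : matAbs C = CFC.abs C :=
  (posSemidef_conjTranspose_mul_self C).sqrt_eq_conj_diagonal.symm

theorem three_mul_le_of_sq_mul_le {k m : ℕ} {x : ℝ} (hx : 0 < x) (hkm : k ≤ m)
    (h : (k : ℝ) ^ 2 * (9 * x / m ^ 2) ≤ x) : 3 * k ≤ m := by
  rcases Nat.eq_zero_or_pos m with rfl | hm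
  · omega
  have hm2 : (0 : ℝ) < m ^ 2 := by positivity
  rw [← mul_div_assoc, div_le_iff₀ hm2] at h
  have : ((3 * k : ℕ) : ℝ) ^ 2 ≤ (m : ℝ) ^ 2 := by push_cast; nlinarith
  exact_mod_cast (pow_le_pow_iff_left₀ (by positivity) (by positivity) two_ne_zero).mp this

/-- Low eigenspace lemma (Lemma 3.2) together with positive semidefiniteness of
the matrix `N(i,j) = tr(√M Aᵢ √M Aⱼ √M)`, stated in subspace form. -/
theorem low_eigenspace (n m : ℕ) (A : Fin m → Matrix (Fin n) (Fin n) ℝ)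
    (hsymm : ∀ i, (A i).IsSymm)
    (hsum : ((1 : Matrix (Fin n) (Fin n) ℝ) - ∑ i, matAbs (A i)).PosSemidef)
    (M : Matrix (Fin n) (Fin n) ℝ) (hM : M.PosSemidef) (htr : M.trace = 1) :
    (Matrix.of fun i j : Fin m =>
      (psdSqrt M * A i * psdSqrt M * A j * psdSqrt M).trace).PosSemidef ∧
    ∃ W : Submodule ℝ (Fin m → ℝ),
      (m : ℝ) / 3 ≤ (Module.finrank ℝ W : ℝ) ∧
      ∀ y ∈ W, (∑ i, (y i) ^ 2) = 1 →
        y ⬝ᵥ ((Matrix.of fun i j : Fin m =>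
            (psdSqrt M * A i * psdSqrt M * A j * psdSqrt M).trace) *ᵥ y) ≤
          9 * Real.sqrt n / m ^ 2 ∧
        (psdSqrt M * (∑ i, y i • A i) * psdSqrt M * (∑ i, y i • A i) * psdSqrt M).trace ≤
          9 * Real.sqrt n / m ^ 2 := by
  have hn_pos : 0 < √(n : ℝ) := by
    refine Real.sqrt_pos.mpr (Nat.cast_pos.mpr (Nat.pos_of_ne_zero ?_))
    rintro rfl
    simp [trace] at htr
  have hS := posSemidef_psdSqrt hM
  have hSS := psdSqrt_mul_self hM
  set S := psdSqrt M
  have hA : ∀ i, (A i).IsHermitian := fun i => isHermitian_iff_isSymm.mpr (hsymm i)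
  have hsum' : (1 - ∑ i, CFC.abs (A i)).PosSemidef := by simpa only [matAbs_eq_abs] using hsum
  have htrS : S.trace ≤ √n := Real.le_sqrt_of_sq_le (by simpa [hSS, htr] using hS.1.trace_sq_le)
  set t : ℝ := 9 * √n / m ^ 2
  have hbad := sq_card_eigenvalues_traceGram_gt_mul_le hS hA hsum' (by positivity : 0 ≤ t)
  rw [hSS, htr, one_mul] at hbad
  have h3 := three_mul_le_of_sq_mul_le hn_pos ((card_filter_le _ _).trans_eq (by simp))
    (hbad.trans htrS)
  obtain ⟨W, hW_dim, hW⟩ := (posSemidef_traceGram hS hA).1.exists_submodule_dotProduct_mulVec_le t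
  refine ⟨posSemidef_traceGram hS hA, W, ?_, fun y hy hy1 => ?_⟩
  · rw [Fintype.card_fin] at hW_dim
    rw [div_le_iff₀ three_pos]
    exact_mod_cast (by omega : m ≤ Module.finrank ℝ W * 3)
  · have hquad := hW y hy
    rw [show y ⬝ᵥ y = 1 by simpa [dotProduct, sq] using hy1, mul_one] at hquad
    exact ⟨hquad, dotProduct_traceGram_mulVec S A y ▸ hquad⟩
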